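/- arXiv:1109.3646 — 3 statements merged into one kernel-verified Lean document; each statement's English description precedes it below -/
import Mathlib

section
/- X is almost K-reduced if and only if its complexification Y = X_ℂ is G-saturated, where G = K_ℂ acts on V = W ⊗_ℝ ℂ. -/
/-!
Common framework: a "compact Lie group / complex reductive group acting on a
finite-dimensional module" is modelled as a subgroup of invertible `n × n`
matrices over `𝕜 = ℝ` or `ℂ` acting on `Fin n → 𝕜` by `Matrix.mulVec`.
Polynomial functions on the module are `MvPolynomial (Fin n) 𝕜`.
-/

set_option synthInstance.maxHeartbeats 1000000
set_option maxHeartbeats 1000000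

noncomputable section

open MvPolynomial

namespace ZPaper

variable (𝕜 : Type) [RCLike 𝕜] (n : ℕ)

/-- The zero set of a family of polynomials. -/
def zeroSet (S : Set (MvPolynomial (Fin n) 𝕜)) : Set (Fin n → 𝕜) :=
  {v | ∀ p ∈ S, eval v p = 0}

/-- A subset of `𝕜ⁿ` is algebraic if it is the zero set of a family of polynomials. -/
def IsAlgebraicSet (X : Set (Fin n → 𝕜)) : Prop :=
  ∃ S : Set (MvPolynomial (Fin n) 𝕜), X = zeroSet 𝕜 n S

/-- The vanishing ideal `I(X)` of a subset `X ⊆ 𝕜ⁿ`. -/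
def vanishingIdeal (X : Set (Fin n → 𝕜)) : Ideal (MvPolynomial (Fin n) 𝕜) where
  carrier := {p | ∀ x ∈ X, eval x p = 0}
  zero_mem' := by intro x _; simp
  add_mem' := by intro a b ha hb x hx; simp [ha x hx, hb x hx]
  smul_mem' := by intro c p hp x hx; simp [smul_eq_mul, hp x hx]

/-- The Zariski closure of a subset of `𝕜ⁿ`. -/
def zclosure (A : Set (Fin n → 𝕜)) : Set (Fin n → 𝕜) :=
  zeroSet 𝕜 n (vanishingIdeal 𝕜 n A : Set (MvPolynomial (Fin n) 𝕜))

/-- `A` is Zariski dense in `X`: every polynomial vanishing on `A` vanishes on `X`. -/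
def ZDenseIn (A X : Set (Fin n → 𝕜)) : Prop :=
  ∀ p : MvPolynomial (Fin n) 𝕜, (∀ a ∈ A, eval a p = 0) → ∀ x ∈ X, eval x p = 0

/-- A set of matrices is a subgroup of `GL_n(𝕜)`. -/
def IsMatSubgroup (G : Set (Matrix (Fin n) (Fin n) 𝕜)) : Prop :=
  (1 : Matrix (Fin n) (Fin n) 𝕜) ∈ G ∧ (∀ a ∈ G, ∀ b ∈ G, a * b ∈ G) ∧
    ∀ a ∈ G, IsUnit a ∧ a⁻¹ ∈ G

/-- `X` is a `G`-stable subset of `𝕜ⁿ`. -/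
def Stabilizes (G : Set (Matrix (Fin n) (Fin n) 𝕜)) (X : Set (Fin n → 𝕜)) : Prop :=
  ∀ g ∈ G, ∀ x ∈ X, Matrix.mulVec g x ∈ X

/-- A polynomial is `G`-invariant. -/
def Invariant (G : Set (Matrix (Fin n) (Fin n) 𝕜)) (p : MvPolynomial (Fin n) 𝕜) : Prop :=
  ∀ g ∈ G, ∀ v : Fin n → 𝕜, eval (Matrix.mulVec g v) p = eval v p

/-- `I_G(X)`: the ideal generated by the `G`-invariant polynomials vanishing on `X`,
i.e. by `I(X)^G = I(X) ∩ 𝕜[V]^G`. -/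
def invariantIdeal (G : Set (Matrix (Fin n) (Fin n) 𝕜)) (X : Set (Fin n → 𝕜)) :
    Ideal (MvPolynomial (Fin n) 𝕜) :=
  Ideal.span {p | Invariant 𝕜 n G p ∧ ∀ x ∈ X, eval x p = 0}

/-- `X` is `G`-reduced: `I_G(X) = I(X)`. -/
def IsGReduced (G : Set (Matrix (Fin n) (Fin n) 𝕜)) (X : Set (Fin n → 𝕜)) : Prop :=
  invariantIdeal 𝕜 n G X = vanishingIdeal 𝕜 n X

/-- `X` is almost `G`-reduced: `√I_G(X) = I(X)`. -/
def IsAlmostGReduced (G : Set (Matrix (Fin n) (Fin n) 𝕜)) (X : Set (Fin n → 𝕜)) : Prop :=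
  (invariantIdeal 𝕜 n G X).radical = vanishingIdeal 𝕜 n X

/-- The orbit `G·v`. -/
def orbit (G : Set (Matrix (Fin n) (Fin n) 𝕜)) (v : Fin n → 𝕜) : Set (Fin n → 𝕜) :=
  (fun g => Matrix.mulVec g v) '' G

/-- The isotropy group `G_v`. -/
def isotropy (G : Set (Matrix (Fin n) (Fin n) 𝕜)) (v : Fin n → 𝕜) :
    Set (Matrix (Fin n) (Fin n) 𝕜) :=
  {g ∈ G | Matrix.mulVec g v = v}

/-- Matrix exponential. -/
def mexp (A : Matrix (Fin n) (Fin n) 𝕜) : Matrix (Fin n) (Fin n) 𝕜 :=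
  ∑' k : ℕ, ((k.factorial : 𝕜)⁻¹) • A ^ k

/-- The Lie algebra of a matrix group: matrices whose one-parameter subgroup lies in `G`. -/
def lieAlgebra (G : Set (Matrix (Fin n) (Fin n) 𝕜)) : Set (Matrix (Fin n) (Fin n) 𝕜) :=
  {A | ∀ t : 𝕜, mexp 𝕜 n (t • A) ∈ G}

/-- The tangent space `T_v(G·v)` to the orbit, i.e. `𝔤·v`. -/
def orbitTangent (G : Set (Matrix (Fin n) (Fin n) 𝕜)) (v : Fin n → 𝕜) :
    Submodule 𝕜 (Fin n → 𝕜) :=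
  Submodule.span 𝕜 ((fun A => Matrix.mulVec A v) '' lieAlgebra 𝕜 n G)

/-- `N` is a `G_v`-stable complement to `T_v(G·v)` in `𝕜ⁿ` (a slice at `v`). -/
def IsSliceComplement (G : Set (Matrix (Fin n) (Fin n) 𝕜)) (v : Fin n → 𝕜)
    (N : Submodule 𝕜 (Fin n → 𝕜)) : Prop :=
  IsCompl (orbitTangent 𝕜 n G v) N ∧
    ∀ g ∈ isotropy 𝕜 n G v, ∀ x ∈ N, Matrix.mulVec g x ∈ N

/-- The image of `H` in `GL(N)` is trivial. -/
def ActsTriviallyOn (H : Set (Matrix (Fin n) (Fin n) 𝕜))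
    (N : Submodule 𝕜 (Fin n → 𝕜)) : Prop :=
  ∀ g ∈ H, ∀ x ∈ N, Matrix.mulVec g x = x

/-- The image of `H` in `GL(N)` is finite. -/
def HasFiniteImageOn (H : Set (Matrix (Fin n) (Fin n) 𝕜))
    (N : Submodule 𝕜 (Fin n → 𝕜)) : Prop :=
  Set.Finite ((fun g => fun x : N => Matrix.mulVec g (x : Fin n → 𝕜)) '' H)

/-- The orbit `G·v` is (Zariski) closed. -/
def HasClosedOrbit (G : Set (Matrix (Fin n) (Fin n) 𝕜)) (v : Fin n → 𝕜) : Prop :=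
  zclosure 𝕜 n (orbit 𝕜 n G v) ⊆ orbit 𝕜 n G v

/-- `v` lies on a principal orbit: `G·v` is closed and the isotropy group acts trivially on
some (hence any) slice at `v`. -/
def IsPrincipalPt (G : Set (Matrix (Fin n) (Fin n) 𝕜)) (v : Fin n → 𝕜) : Prop :=
  HasClosedOrbit 𝕜 n G v ∧
    ∃ N, IsSliceComplement 𝕜 n G v N ∧ ActsTriviallyOn 𝕜 n (isotropy 𝕜 n G v) N

/-- `v` lies on an almost principal orbit. -/
def IsAlmostPrincipalPt (G : Set (Matrix (Fin n) (Fin n) 𝕜)) (v : Fin n → 𝕜) : Prop :=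
  HasClosedOrbit 𝕜 n G v ∧
    ∃ N, IsSliceComplement 𝕜 n G v N ∧ HasFiniteImageOn 𝕜 n (isotropy 𝕜 n G v) N

/-- The set of principal points `V_pr`. -/
def prPoints (G : Set (Matrix (Fin n) (Fin n) 𝕜)) : Set (Fin n → 𝕜) :=
  {v | IsPrincipalPt 𝕜 n G v}

/-- The set of almost principal points `V_apr`. -/
def aprPoints (G : Set (Matrix (Fin n) (Fin n) 𝕜)) : Set (Fin n → 𝕜) :=
  {v | IsAlmostPrincipalPt 𝕜 n G v}

/-- `π⁻¹(π(Y))`: all points that the invariants cannot separate from `Y`. -/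
def saturation (G : Set (Matrix (Fin n) (Fin n) 𝕜)) (Y : Set (Fin n → 𝕜)) :
    Set (Fin n → 𝕜) :=
  {v | ∃ y ∈ Y, ∀ p, Invariant 𝕜 n G p → eval v p = eval y p}

/-- `Y` is `G`-saturated: `Y = π⁻¹(π(Y))`. -/
def IsSaturated (G : Set (Matrix (Fin n) (Fin n) 𝕜)) (Y : Set (Fin n → 𝕜)) : Prop :=
  Y = saturation 𝕜 n G Y

/-- The fiber `π⁻¹(π(v))` of the quotient morphism. -/
def piFiber (G : Set (Matrix (Fin n) (Fin n) 𝕜)) (v : Fin n → 𝕜) : Set (Fin n → 𝕜) :=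
  {u | ∀ p, Invariant 𝕜 n G p → eval u p = eval v p}

/-- The invariant ring `𝕜[V]^G` as a subalgebra of `𝕜[V]`. -/
def invariantSubalgebra (G : Set (Matrix (Fin n) (Fin n) 𝕜)) :
    Subalgebra 𝕜 (MvPolynomial (Fin n) 𝕜) where
  carrier := {p | Invariant 𝕜 n G p}
  mul_mem' := by intro a b ha hb g hg v; simp [ha g hg v, hb g hg v]
  one_mem' := by intro g hg v; simp
  add_mem' := by intro a b ha hb g hg v; simp [ha g hg v, hb g hg v]
  zero_mem' := by intro g hg v; simp
  algebraMap_mem' := by intro r g hg v; simp [MvPolynomial.algebraMap_eq]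

/-- The representation is cofree: `𝕜[V]` is a free module over `𝕜[V]^G`. -/
def IsCofree (G : Set (Matrix (Fin n) (Fin n) 𝕜)) : Prop :=
  Module.Free ↥(invariantSubalgebra 𝕜 n G) (MvPolynomial (Fin n) 𝕜)

/-- The vanishing ideal of `π(Y)` in `𝕜[V//G] = 𝕜[V]^G`. -/
def quotVanishingIdeal (G : Set (Matrix (Fin n) (Fin n) 𝕜)) (Y : Set (Fin n → 𝕜)) :
    Ideal ↥(invariantSubalgebra 𝕜 n G) where
  carrier := {p | ∀ y ∈ Y, eval y (p : MvPolynomial (Fin n) 𝕜) = 0}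
  zero_mem' := by intro y hy; simp
  add_mem' := by intro a b ha hb y hy; simp [ha y hy, hb y hy]
  smul_mem' := by intro c p hp y hy; simp [smul_eq_mul, hp y hy]

/-- The module is stable: there is a nonempty Zariski-open set of points with closed orbit. -/
def IsStableModule (G : Set (Matrix (Fin n) (Fin n) 𝕜)) : Prop :=
  ∃ U : Set (Fin n → 𝕜), U.Nonempty ∧ IsAlgebraicSet 𝕜 n Uᶜ ∧
    ∀ v ∈ U, HasClosedOrbit 𝕜 n G v

/-- `G` is Zariski closed in `GL_n(𝕜)`. -/
def IsZClosedInGL (G : Set (Matrix (Fin n) (Fin n) 𝕜)) : Prop :=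
  ∃ P : Set (MvPolynomial (Fin n × Fin n) 𝕜),
    G = {g | IsUnit g ∧ ∀ p ∈ P, eval (fun ij => g ij.1 ij.2) p = 0}

/-- `G` is a (linearly) reductive algebraic group: a Zariski closed subgroup of `GL_n`
containing a Zariski-dense compact subgroup (the unitarian trick characterization). -/
def IsReductiveGroup (G : Set (Matrix (Fin n) (Fin n) 𝕜)) : Prop :=
  IsMatSubgroup 𝕜 n G ∧ IsZClosedInGL 𝕜 n G ∧
    ∃ K : Set (Matrix (Fin n) (Fin n) 𝕜), K ⊆ G ∧ IsCompact K ∧ IsMatSubgroup 𝕜 n K ∧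
      ∀ p : MvPolynomial (Fin n × Fin n) 𝕜,
        (∀ k ∈ K, eval (fun ij => k ij.1 ij.2) p = 0) →
          ∀ g ∈ G, eval (fun ij => g ij.1 ij.2) p = 0

/-- The isotropy groups of `v` and `w` are conjugate in `G`. -/
def ConjIsotropy (G : Set (Matrix (Fin n) (Fin n) 𝕜)) (v w : Fin n → 𝕜) : Prop :=
  ∃ g ∈ G, isotropy 𝕜 n G w = (fun h => g * h * g⁻¹) '' isotropy 𝕜 n G v

/-- The (Luna) stratum of `V` determined by a point `v` with closed orbit: the inverse image
under `π` of the set of closed orbits with isotropy group conjugate to `G_v`. -/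
def stratumOf (G : Set (Matrix (Fin n) (Fin n) 𝕜)) (v : Fin n → 𝕜) : Set (Fin n → 𝕜) :=
  {u | ∃ w, HasClosedOrbit 𝕜 n G w ∧ w ∈ zclosure 𝕜 n (orbit 𝕜 n G u) ∧
    ConjIsotropy 𝕜 n G v w}

/-- Dimension of (the Zariski closure of) a subset of `𝕜ⁿ`, as the Krull dimension of its
coordinate ring. -/
def adim (X : Set (Fin n → 𝕜)) : WithBot ℕ∞ :=
  ringKrullDim (MvPolynomial (Fin n) 𝕜 ⧸ vanishingIdeal 𝕜 n X)

/-- A nonempty algebraic set with prime vanishing ideal, i.e. an irreducible algebraic set. -/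
def IsIrredAlg (Z : Set (Fin n → 𝕜)) : Prop :=
  IsAlgebraicSet 𝕜 n Z ∧ Z.Nonempty ∧ (vanishingIdeal 𝕜 n Z).IsPrime

/-- `Z` is an irreducible component of `Y`. -/
def IsIrredComponentOf (Y Z : Set (Fin n → 𝕜)) : Prop :=
  IsIrredAlg 𝕜 n Z ∧ Z ⊆ Y ∧
    ∀ Z', IsIrredAlg 𝕜 n Z' → Z ⊆ Z' → Z' ⊆ Y → Z' = Z

/-- The rank at `v` of the differential of `f = (f_1, …, f_d) : V → 𝕜^d`. -/
def jacRank {d : ℕ} (f : Fin d → MvPolynomial (Fin n) 𝕜) (v : Fin n → 𝕜) : ℕ :=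
  (Matrix.of fun (i : Fin d) (j : Fin n) => eval v (pderiv j (f i))).rank

/-- A polynomial is `H`-invariant as a function on the submodule `N`. -/
def InvariantOn (H : Set (Matrix (Fin n) (Fin n) 𝕜)) (N : Submodule 𝕜 (Fin n → 𝕜))
    (p : MvPolynomial (Fin n) 𝕜) : Prop :=
  ∀ g ∈ H, ∀ x ∈ N, eval (Matrix.mulVec g x) p = eval x p

/-- The null cone of the `H`-module `N`: points of `N` which the `H`-invariant functions on `N`
cannot separate from `0`. -/
def sliceNullCone (H : Set (Matrix (Fin n) (Fin n) 𝕜)) (N : Submodule 𝕜 (Fin n → 𝕜)) :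
    Set (Fin n → 𝕜) :=
  {x | x ∈ N ∧ ∀ p, InvariantOn 𝕜 n H N p → eval x p = eval (0 : Fin n → 𝕜) p}

/-- The `H`-module `N` is coreduced: the vanishing ideal of its null cone in `𝕜[N]` is
generated by `H`-invariant functions.  (Stated in `𝕜[V]`: the vanishing ideal of the null
cone equals the ideal generated by the invariant functions vanishing on it together with the
vanishing ideal of `N`.) -/
def CoreducedOn (H : Set (Matrix (Fin n) (Fin n) 𝕜)) (N : Submodule 𝕜 (Fin n → 𝕜)) : Prop :=
  vanishingIdeal 𝕜 n (sliceNullCone 𝕜 n H N) =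
    Ideal.span ({p | InvariantOn 𝕜 n H N p ∧ ∀ x ∈ sliceNullCone 𝕜 n H N, eval x p = 0} ∪
      {p | ∀ x ∈ (N : Set (Fin n → 𝕜)), eval x p = 0})

/-- Complexification of a real vector. -/
def cVec (w : Fin n → ℝ) : Fin n → ℂ := fun i => (w i : ℂ)

/-- The complexification `G = K_ℂ` of a compact matrix group `K ⊆ GL_n(ℝ)`: the Zariski
closure of `K` in the complex matrices. -/
def complexifiedGroup (K : Set (Matrix (Fin n) (Fin n) ℝ)) :
    Set (Matrix (Fin n) (Fin n) ℂ) :=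
  {g | ∀ p : MvPolynomial (Fin n × Fin n) ℂ,
    (∀ k ∈ K, eval (fun ij => (k ij.1 ij.2 : ℂ)) p = 0) →
      eval (fun ij => g ij.1 ij.2) p = 0}

/-- The complexification `Y = X_ℂ ⊆ ℂⁿ` of `X ⊆ ℝⁿ`: the Zariski closure of `X` in `ℂⁿ`. -/
def complexification (X : Set (Fin n → ℝ)) : Set (Fin n → ℂ) :=
  zclosure ℂ n (cVec n '' X)

end ZPaper

/-!
Write `J ⊆ ℂ[V]` for the extension of `I_K(X)`. Splitting complex polynomials into real and
imaginary parts shows that every ideal of `ℝ[W]` is the contraction of its extension to `ℂ[V]`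
and that `I(Y)` is the extension of `I(X)`; with the Nullstellensatz, `X` is almost
`K`-reduced iff `Y` is the zero set of `J`.

That zero set is exactly `π⁻¹(π(Y))`. Real invariants extend to `G`-invariants, so `J`
vanishes on `π⁻¹(π(Y))`. Conversely, if the fibre of `π` through a zero `z` of `J` missed `Y`,
the Nullstellensatz would give `h ∈ I(Y)` equal to `1` on `G·z`; its Haar average over `K` is
a `K`-invariant vanishing on `X`, hence lies in `J`, yet equals `1` at `z`.
-/

open Matrix

namespace MvPolynomial

section RealPart

variable {σ : Type*}

def rePart : MvPolynomial σ ℂ →+ MvPolynomial σ ℝ where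
  toFun := AddMonoidAlgebra.map Complex.reAddGroupHom
  map_zero' := AddMonoidAlgebra.map_zero _
  map_add' := AddMonoidAlgebra.map_add _

def imPart : MvPolynomial σ ℂ →+ MvPolynomial σ ℝ where
  toFun := AddMonoidAlgebra.map Complex.imAddGroupHom
  map_zero' := AddMonoidAlgebra.map_zero _
  map_add' := AddMonoidAlgebra.map_add _

@[simp]
theorem coeff_rePart (m : σ →₀ ℕ) (q : MvPolynomial σ ℂ) :
    coeff m (rePart q) = (coeff m q).re := rfl

@[simp]
theorem coeff_imPart (m : σ →₀ ℕ) (q : MvPolynomial σ ℂ) :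
    coeff m (imPart q) = (coeff m q).im := rfl

theorem map_rePart_add_C_I_mul_map_imPart (q : MvPolynomial σ ℂ) :
    map (algebraMap ℝ ℂ) (rePart q) + C Complex.I * map (algebraMap ℝ ℂ) (imPart q) = q := by
  ext m
  simp [coeff_C_mul, coeff_map, mul_comm Complex.I]

theorem rePart_map_mul (f : MvPolynomial σ ℝ) (q : MvPolynomial σ ℂ) :
    rePart (map (algebraMap ℝ ℂ) f * q) = f * rePart q := by
  classical
  ext m
  simp [coeff_mul, coeff_map, Complex.re_sum]

theorem rePart_map (f : MvPolynomial σ ℝ) : rePart (map (algebraMap ℝ ℂ) f) = f := by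
  ext m
  simp [coeff_map]

theorem eval_ofReal_map (x : σ → ℝ) (f : MvPolynomial σ ℝ) :
    eval (fun i => (x i : ℂ)) (map (algebraMap ℝ ℂ) f) = eval x f :=
  (map_eval (algebraMap ℝ ℂ) x f).symm

theorem eval_rePart (x : σ → ℝ) (q : MvPolynomial σ ℂ) :
    eval x (rePart q) = (eval (fun i => (x i : ℂ)) q).re := by
  conv_rhs => rw [← map_rePart_add_C_I_mul_map_imPart q]
  simp only [map_add, map_mul, eval_C, eval_ofReal_map]
  simp

theorem eval_imPart (x : σ → ℝ) (q : MvPolynomial σ ℂ) :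
    eval x (imPart q) = (eval (fun i => (x i : ℂ)) q).im := by
  conv_rhs => rw [← map_rePart_add_C_I_mul_map_imPart q]
  simp only [map_add, map_mul, eval_C, eval_ofReal_map]
  simp

theorem eq_zero_of_eval_ofReal_eq_zero {q : MvPolynomial σ ℂ}
    (h : ∀ x : σ → ℝ, eval (fun i => (x i : ℂ)) q = 0) : q = 0 := by
  have hre : rePart q = 0 := funext fun x => by simp [eval_rePart, h]
  have him : imPart q = 0 := funext fun x => by simp [eval_imPart, h]
  rw [← map_rePart_add_C_I_mul_map_imPart q, hre, him]
  simp

theorem mem_map_map_of_rePart_mem_of_imPart_mem {I : Ideal (MvPolynomial σ ℝ)}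
    {q : MvPolynomial σ ℂ} (hre : rePart q ∈ I) (him : imPart q ∈ I) :
    q ∈ I.map (map (algebraMap ℝ ℂ)) := by
  rw [← map_rePart_add_C_I_mul_map_imPart q]
  exact add_mem (Ideal.mem_map_of_mem _ hre) (Ideal.mul_mem_left _ _ (Ideal.mem_map_of_mem _ him))

theorem comap_map_map_algebraMap (I : Ideal (MvPolynomial σ ℝ)) :
    (I.map (map (algebraMap ℝ ℂ))).comap (map (algebraMap ℝ ℂ)) = I := by
  refine le_antisymm (fun p hp => ?_) Ideal.le_comap_map
  obtain ⟨c, hc, hsum⟩ := Submodule.mem_span_set.mp (Ideal.mem_comap.mp hp)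
  rw [← rePart_map p, ← hsum, Finsupp.sum, map_sum]
  refine Ideal.sum_mem _ fun g hg => ?_
  obtain ⟨f, hf, rfl⟩ := hc hg
  rw [smul_eq_mul, mul_comm, rePart_map_mul]
  exact I.mul_mem_right _ hf

end RealPart

section Nullstellensatz

variable {σ 𝕂 : Type*} [Finite σ] [Field 𝕂] [IsAlgClosed 𝕂]

theorem zeroLocus_eq_iff_radical_eq {I J : Ideal (MvPolynomial σ 𝕂)} :
    zeroLocus 𝕂 I = zeroLocus 𝕂 J ↔ I.radical = J.radical := by
  refine ⟨fun h => ?_, fun h => ?_⟩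
  · rw [← vanishingIdeal_zeroLocus_eq_radical (K := 𝕂), h, vanishingIdeal_zeroLocus_eq_radical]
  · have hl := (zeroLocus_vanishingIdeal_galoisConnection (σ := σ) (k := 𝕂) (K := 𝕂)).l_u_l_eq_l
    rw [← hl I, ← hl J, vanishingIdeal_zeroLocus_eq_radical, vanishingIdeal_zeroLocus_eq_radical, h]

end Nullstellensatz

section MulVecSubst

variable {ι R : Type*} [Fintype ι] [CommSemiring R]

/-- `h (A v)` as a polynomial in the entries `A i j` and the coordinates `v j`. -/
def mulVecSubst (h : MvPolynomial ι R) : MvPolynomial ι (MvPolynomial (ι × ι) R) :=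
  eval₂ (C.comp C) (fun i => ∑ j, C (X (i, j)) * X j) h

theorem eval₂_mulVecSubst (h : MvPolynomial ι R) (A : Matrix ι ι R) (v : ι → R) :
    eval₂ (eval fun ij : ι × ι => A ij.1 ij.2) v (mulVecSubst h) = eval (A *ᵥ v) h := by
  have hC : (eval₂Hom (eval fun ij : ι × ι => A ij.1 ij.2) v).comp (C.comp C) = RingHom.id R := by
    ext; simp
  have hX : (eval₂Hom (eval fun ij : ι × ι => A ij.1 ij.2) v ∘ fun i => ∑ j, C (X (i, j)) * X j) =
      A *ᵥ v := by
    funext i; simp [Matrix.mulVec, dotProduct]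
  rw [mulVecSubst, ← coe_eval₂Hom, eval₂_comp_left, hC, hX, eval₂_id]

theorem eval_map_eval_mulVecSubst (h : MvPolynomial ι R) (A : Matrix ι ι R) (v : ι → R) :
    eval v (map (eval fun ij : ι × ι => A ij.1 ij.2) (mulVecSubst h)) = eval (A *ᵥ v) h := by
  rw [eval_map, eval₂_mulVecSubst]

theorem eval_eval_mulVecSubst (h : MvPolynomial ι R) (A : Matrix ι ι R) (v : ι → R) :
    eval (fun ij : ι × ι => A ij.1 ij.2) (eval (fun i => C (v i)) (mulVecSubst h)) =
      eval (A *ᵥ v) h := by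
  change eval _ (eval₂ (RingHom.id _) _ _) = _
  rw [eval_eval₂, RingHom.comp_id]
  simpa using eval₂_mulVecSubst h A v

end MulVecSubst

section Averaging

open MeasureTheory

variable {ι 𝕜 T : Type*} [Fintype ι] [RCLike 𝕜] [TopologicalSpace T] [CompactSpace T]
  [MeasurableSpace T] [OpensMeasurableSpace T]

theorem exists_eval_eq_integral (μ : Measure T) [IsFiniteMeasure μ] {ρ : T → Matrix ι ι 𝕜}
    (hρ : Continuous ρ) (h : MvPolynomial ι 𝕜) :
    ∃ R : MvPolynomial ι 𝕜, ∀ v, eval v R = ∫ t, eval (ρ t *ᵥ v) h ∂μ := by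
  classical
  -- the coefficients of `v ↦ h (ρ t v)` are continuous in `t`; integrate them one by one
  let F : (ι →₀ ℕ) → T → 𝕜 := fun m t =>
    eval (fun ij : ι × ι => ρ t ij.1 ij.2) (coeff m (mulVecSubst h))
  have hFc : ∀ m, Continuous (F m) := fun m =>
    (continuous_eval _).comp (continuous_pi fun ij =>
      (continuous_apply_apply ij.1 ij.2).comp hρ)
  have hF : ∀ m, Integrable (F m) μ := fun m => by
    have hs : HasCompactSupport (F m) := HasCompactSupport.of_compactSpace _
    exact (hFc m).integrable_of_hasCompactSupport hs
  refine ⟨∑ m ∈ (mulVecSubst h).support, monomial m (∫ t, F m t ∂μ), fun v => ?_⟩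
  simp only [map_sum, eval_monomial, ← integral_mul_const]
  rw [← integral_finsetSum _ fun m _ => (hF m).mul_const _]
  congr 1 with t
  rw [← eval₂_mulVecSubst, eval₂_eq]
  rfl

variable [DecidableEq ι] [Group T] [IsTopologicalGroup T] [MeasurableMul T]

theorem exists_invariant_average (μ : Measure T) [IsProbabilityMeasure μ] [μ.IsMulLeftInvariant]
    (ρ : T →* Matrix ι ι 𝕜) (hρ : Continuous ρ) (h : MvPolynomial ι 𝕜) :
    ∃ R : MvPolynomial ι 𝕜, (∀ t v, eval (ρ t *ᵥ v) R = eval v R) ∧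
      ∀ v c, (∀ t, eval (ρ t *ᵥ v) h = c) → eval v R = c := by
  obtain ⟨R, hR⟩ := exists_eval_eq_integral μ (hρ.comp continuous_inv) h
  refine ⟨R, fun s v => ?_, fun v c hc => ?_⟩
  · simp only [hR, Function.comp_apply, mulVec_mulVec, ← map_mul]
    simpa [_root_.mul_inv_rev] using integral_mul_left_eq_self (fun t => eval (ρ t⁻¹ *ᵥ v) h) s⁻¹
  · simp [hR, hc]

end Averaging

end MvPolynomial

theorem Ideal.radical_eq_iff_radical_map_eq {R S : Type*} [CommRing R] [CommRing S] {f : R →+* S}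
    (hf : ∀ J : Ideal R, (J.map f).comap f = J) {I J : Ideal R} (hI : I.IsRadical) :
    J.radical = I ↔ (J.map f).radical = (I.map f).radical := by
  refine ⟨fun h => le_antisymm ?_ ?_, fun h => ?_⟩
  · exact Ideal.radical_mono (h ▸ Ideal.map_mono J.le_radical)
  · rw [← h]
    exact (Ideal.radical_mono (Ideal.map_radical_le f)).trans_eq (Ideal.radical_idem _)
  · calc J.radical = ((J.map f).comap f).radical := by rw [hf]
      _ = ((J.map f).radical).comap f := (Ideal.comap_radical f _).symm
      _ = ((I.map f).radical).comap f := by rw [h]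
      _ = I := by rw [Ideal.comap_radical, hf, Ideal.radical_eq_iff.mpr hI]

namespace ZPaper

section CompactMatrixGroup

variable {𝕜 : Type} [RCLike 𝕜] {n : ℕ} {K : Set (Matrix (Fin n) (Fin n) 𝕜)}

theorem IsMatSubgroup.isUnit_det (hK : IsMatSubgroup 𝕜 n K) {k : Matrix (Fin n) (Fin n) 𝕜}
    (hk : k ∈ K) : IsUnit k.det :=
  (Matrix.isUnit_iff_isUnit_det k).mp (hK.2.2 k hk).1

abbrev IsMatSubgroup.toGroup (hK : IsMatSubgroup 𝕜 n K) : Group K where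
  mul a b := ⟨a * b, hK.2.1 _ a.2 _ b.2⟩
  one := ⟨1, hK.1⟩
  inv a := ⟨(a : Matrix (Fin n) (Fin n) 𝕜)⁻¹, (hK.2.2 _ a.2).2⟩
  mul_assoc a b c := Subtype.ext (Matrix.mul_assoc _ _ _)
  one_mul a := Subtype.ext (Matrix.one_mul _)
  mul_one a := Subtype.ext (Matrix.mul_one _)
  inv_mul_cancel a := Subtype.ext (Matrix.nonsing_inv_mul _ (hK.isUnit_det a.2))

theorem IsMatSubgroup.isTopologicalGroup (hK : IsMatSubgroup 𝕜 n K) :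
    @IsTopologicalGroup K _ hK.toGroup :=
  letI := hK.toGroup
  { continuous_mul := ((continuous_subtype_val.comp continuous_fst).matrix_mul
      (continuous_subtype_val.comp continuous_snd)).subtype_mk _
    continuous_inv := (continuous_iff_continuousAt.mpr fun a =>
      (continuousAt_matrix_inv _ (by
        rw [Ring.inverse_eq_inv']
        exact continuousAt_inv₀ (hK.isUnit_det a.2).ne_zero)).comp
        continuous_subtype_val.continuousAt).subtype_mk _ }

end CompactMatrixGroup

variable {n : ℕ} {K : Set (Matrix (Fin n) (Fin n) ℝ)} {X : Set (Fin n → ℝ)}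

open MeasureTheory in
theorem IsMatSubgroup.exists_invariant_average
    (hK : IsMatSubgroup ℝ n K) (hKc : IsCompact K) (h : MvPolynomial (Fin n) ℂ) :
    ∃ R : MvPolynomial (Fin n) ℂ, (∀ k ∈ K, ∀ v, eval (k.map (↑) *ᵥ v) R = eval v R) ∧
      ∀ v c, (∀ k ∈ K, eval (k.map (↑) *ᵥ v) h = c) → eval v R = c := by
  let := hK.toGroup
  have := hK.isTopologicalGroup
  have : CompactSpace K := isCompact_iff_compactSpace.mp hKc
  let : MeasurableSpace K := borel K
  have : BorelSpace K := ⟨rfl⟩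
  let μ := Measure.haarMeasure (⊤ : TopologicalSpace.PositiveCompacts K)
  have : IsProbabilityMeasure μ := ⟨by
    rw [← TopologicalSpace.PositiveCompacts.coe_top]
    exact Measure.haarMeasure_self⟩
  let ρ : K →* Matrix (Fin n) (Fin n) ℂ :=
    { toFun := fun k => (k : Matrix (Fin n) (Fin n) ℝ).map (↑)
      map_one' := Matrix.map_one _ Complex.ofReal_zero Complex.ofReal_one
      map_mul' := fun _ _ => Matrix.map_mul (f := Complex.ofRealHom) }
  obtain ⟨R, hinv, hconst⟩ := MvPolynomial.exists_invariant_average μ ρ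
    (continuous_subtype_val.matrix_map Complex.continuous_ofReal) h
  exact ⟨R, fun k hk => hinv ⟨k, hk⟩, fun v c hc => hconst v c fun k => hc k k.2⟩


theorem vanishingIdeal_isRadical {𝕜 : Type} [RCLike 𝕜] (X : Set (Fin n → 𝕜)) :
    (ZPaper.vanishingIdeal 𝕜 n X).IsRadical := fun p ⟨m, hm⟩ x hx =>
  eq_zero_of_pow_eq_zero ((map_pow (eval x) p m).symm.trans (hm x hx))

theorem exists_eval_mulVec_eq_one_of_notMem_saturation {G : Set (Matrix (Fin n) (Fin n) ℂ)}
    {A : Set (Fin n → ℂ)} {z : Fin n → ℂ} (hz : z ∉ saturation ℂ n G (zclosure ℂ n A)) :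
    ∃ h ∈ ZPaper.vanishingIdeal ℂ n A, ∀ g ∈ G, eval (g *ᵥ z) h = 1 := by
  -- the zero set of `F` is the fibre `π⁻¹(π z)`
  set F := Ideal.span ((fun q => q - C (eval z q)) '' {q | Invariant ℂ n G q})
  have hempty : zeroLocus ℂ (ZPaper.vanishingIdeal ℂ n A ⊔ F) = ∅ := by
    refine Set.eq_empty_of_forall_notMem fun y hy => hz ⟨y, fun p hp => ?_, fun q hq => ?_⟩
    · simpa using hy p (Ideal.mem_sup_left hp)
    · have : eval y (q - C (eval z q)) = 0 :=
        hy _ (Ideal.mem_sup_right (Ideal.subset_span ⟨q, hq, rfl⟩))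
      rw [map_sub, eval_C, sub_eq_zero] at this
      exact this.symm
  have hone : (1 : MvPolynomial (Fin n) ℂ) ∈ ZPaper.vanishingIdeal ℂ n A ⊔ F := by
    rw [← Ideal.eq_top_iff_one, ← Ideal.radical_eq_top,
      ← vanishingIdeal_zeroLocus_eq_radical (K := ℂ), hempty, vanishingIdeal_empty]
  obtain ⟨h, hh, s, hs, hsum⟩ := Submodule.mem_sup.mp hone
  refine ⟨h, hh, fun g hg => ?_⟩
  have hs0 : s ∈ RingHom.ker (eval (g *ᵥ z)) := by
    refine Ideal.span_le.mpr ?_ hs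
    rintro _ ⟨q, hq, rfl⟩
    simp [hq g hg z]
  simpa [RingHom.mem_ker.mp hs0] using congrArg (eval (g *ᵥ z)) hsum

theorem cVec_eq (x : Fin n → ℝ) : cVec n x = fun i => (x i : ℂ) := rfl

theorem map_ofReal_mulVec_cVec (k : Matrix (Fin n) (Fin n) ℝ) (x : Fin n → ℝ) :
    k.map (↑) *ᵥ cVec n x = cVec n (k *ᵥ x) :=
  funext fun i => (RingHom.map_mulVec Complex.ofRealHom k x i).symm

theorem map_ofReal_mem_complexifiedGroup {k : Matrix (Fin n) (Fin n) ℝ} (hk : k ∈ K) :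
    k.map (↑) ∈ complexifiedGroup n K :=
  fun _ hp => hp k hk

theorem invariant_complexifiedGroup_of_forall_mem {F : MvPolynomial (Fin n) ℂ}
    (hF : ∀ k ∈ K, ∀ v, eval (k.map (↑) *ᵥ v) F = eval v F) :
    Invariant ℂ n (complexifiedGroup n K) F := by
  intro g hg v
  -- `g ↦ F (g v) - F v` is a polynomial in the entries of `g` vanishing on `K`
  have := hg (eval (fun i => C (v i)) (mulVecSubst F) - C (eval v F)) fun k hk => by
    rw [map_sub, eval_C, sub_eq_zero, ← hF k hk v]
    exact eval_eval_mulVecSubst F (k.map (↑)) v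
  rwa [map_sub, eval_C, eval_eval_mulVecSubst, sub_eq_zero] at this

theorem Invariant.map_algebraMap {f : MvPolynomial (Fin n) ℝ} (hf : Invariant ℝ n K f) :
    Invariant ℂ n (complexifiedGroup n K) (map (algebraMap ℝ ℂ) f) := by
  refine invariant_complexifiedGroup_of_forall_mem fun k hk v => ?_
  -- `v ↦ f (k v) - f v` vanishes on `ℝⁿ`, hence identically
  have hzero : map (eval fun ij : Fin n × Fin n => (k.map (↑)) ij.1 ij.2)
      (mulVecSubst (map (algebraMap ℝ ℂ) f)) - map (algebraMap ℝ ℂ) f = 0 :=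
    eq_zero_of_eval_ofReal_eq_zero fun x => by
      rw [map_sub, eval_map_eval_mulVecSubst, sub_eq_zero]
      change eval (k.map (↑) *ᵥ cVec n x) _ = eval (cVec n x) _
      rw [map_ofReal_mulVec_cVec, cVec_eq, cVec_eq, eval_ofReal_map, eval_ofReal_map, hf k hk x]
  have := congrArg (eval v) hzero
  rwa [map_sub, map_zero, eval_map_eval_mulVecSubst, sub_eq_zero] at this

theorem invariant_rePart_and_imPart {F : MvPolynomial (Fin n) ℂ}
    (hF : ∀ k ∈ K, ∀ v, eval (k.map (↑) *ᵥ v) F = eval v F) :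
    Invariant ℝ n K (rePart F) ∧ Invariant ℝ n K (imPart F) := by
  have h : ∀ k ∈ K, ∀ x, eval (cVec n (k *ᵥ x)) F = eval (cVec n x) F := fun k hk x => by
    rw [← map_ofReal_mulVec_cVec, hF k hk]
  exact ⟨fun k hk x => by simpa [eval_rePart, cVec_eq] using congrArg Complex.re (h k hk x),
    fun k hk x => by simpa [eval_imPart, cVec_eq] using congrArg Complex.im (h k hk x)⟩

theorem mem_map_invariantIdeal {R : MvPolynomial (Fin n) ℂ}
    (hR : ∀ k ∈ K, ∀ v, eval (k.map (↑) *ᵥ v) R = eval v R)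
    (hX : ∀ x ∈ X, eval (cVec n x) R = 0) :
    R ∈ (invariantIdeal ℝ n K X).map (map (algebraMap ℝ ℂ)) :=
  mem_map_map_of_rePart_mem_of_imPart_mem
    (Ideal.subset_span ⟨(invariant_rePart_and_imPart hR).1, fun x hx => by
      simpa [eval_rePart, cVec_eq] using congrArg Complex.re (hX x hx)⟩)
    (Ideal.subset_span ⟨(invariant_rePart_and_imPart hR).2, fun x hx => by
      simpa [eval_imPart, cVec_eq] using congrArg Complex.im (hX x hx)⟩)

theorem vanishingIdeal_image_cVec (X : Set (Fin n → ℝ)) :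
    ZPaper.vanishingIdeal ℂ n (cVec n '' X) =
      (ZPaper.vanishingIdeal ℝ n X).map (map (algebraMap ℝ ℂ)) := by
  refine le_antisymm (fun q hq => mem_map_map_of_rePart_mem_of_imPart_mem ?_ ?_)
    (Ideal.map_le_iff_le_comap.mpr fun f hf => ?_)
  · exact fun x hx => by simpa [eval_rePart, cVec_eq] using congrArg Complex.re (hq _ ⟨x, hx, rfl⟩)
  · exact fun x hx => by simpa [eval_imPart, cVec_eq] using congrArg Complex.im (hq _ ⟨x, hx, rfl⟩)
  · rintro _ ⟨x, hx, rfl⟩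
    change eval (cVec n x) (map (algebraMap ℝ ℂ) f) = 0
    rw [cVec_eq, eval_ofReal_map, hf x hx, Complex.ofReal_zero]

theorem complexification_eq_zeroLocus (X : Set (Fin n → ℝ)) :
    complexification n X =
      zeroLocus ℂ ((ZPaper.vanishingIdeal ℝ n X).map (map (algebraMap ℝ ℂ))) := by
  rw [← vanishingIdeal_image_cVec]
  rfl

theorem saturation_complexification_subset_zeroLocus :
    saturation ℂ n (complexifiedGroup n K) (complexification n X) ⊆
      zeroLocus ℂ ((invariantIdeal ℝ n K X).map (map (algebraMap ℝ ℂ))) := by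
  rintro z ⟨y, hy, hzy⟩
  rw [invariantIdeal, Ideal.map_span, zeroLocus_span]
  rintro _ ⟨f, ⟨hf, hfX⟩, rfl⟩
  change eval z _ = 0
  rw [hzy _ hf.map_algebraMap]
  refine hy _ ?_
  rw [SetLike.mem_coe, vanishingIdeal_image_cVec]
  exact Ideal.mem_map_of_mem _ hfX

theorem zeroLocus_subset_saturation_complexification (hK : IsMatSubgroup ℝ n K)
    (hKc : IsCompact K) (hX : Stabilizes ℝ n K X) :
    zeroLocus ℂ ((invariantIdeal ℝ n K X).map (map (algebraMap ℝ ℂ))) ⊆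
      saturation ℂ n (complexifiedGroup n K) (complexification n X) := by
  intro z hz
  by_contra hsat
  obtain ⟨h, hh, hone⟩ := exists_eval_mulVec_eq_one_of_notMem_saturation hsat
  obtain ⟨R, hRinv, hRconst⟩ := hK.exists_invariant_average hKc h
  have hR0 : ∀ x ∈ X, eval (cVec n x) R = 0 := fun x hx => hRconst _ 0 fun k hk => by
    rw [map_ofReal_mulVec_cVec]
    exact hh _ ⟨_, hX k hk x hx, rfl⟩
  have hR1 : eval z R = 1 :=
    hRconst z 1 fun k hk => hone _ (map_ofReal_mem_complexifiedGroup hk)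
  have hRz : eval z R = 0 := hz R (mem_map_invariantIdeal hRinv hR0)
  exact one_ne_zero (hR1.symm.trans hRz)

theorem saturation_complexification_eq_zeroLocus (hK : IsMatSubgroup ℝ n K) (hKc : IsCompact K)
    (hX : Stabilizes ℝ n K X) :
    saturation ℂ n (complexifiedGroup n K) (complexification n X) =
      zeroLocus ℂ ((invariantIdeal ℝ n K X).map (map (algebraMap ℝ ℂ))) :=
  saturation_complexification_subset_zeroLocus.antisymm
    (zeroLocus_subset_saturation_complexification hK hKc hX)

theorem almost_K_reduced_iff_saturated_general
    (n : ℕ) (K : Set (Matrix (Fin n) (Fin n) ℝ))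
    (hKgrp : IsMatSubgroup ℝ n K) (hKcpt : IsCompact K)
    (X : Set (Fin n → ℝ)) (hXstab : Stabilizes ℝ n K X) :
    IsAlmostGReduced ℝ n K X ↔
      IsSaturated ℂ n (complexifiedGroup n K) (complexification n X) := by
  rw [IsAlmostGReduced, IsSaturated,
    saturation_complexification_eq_zeroLocus hKgrp hKcpt hXstab, complexification_eq_zeroLocus,
    zeroLocus_eq_iff_radical_eq]
  exact (Ideal.radical_eq_iff_radical_map_eq comap_map_map_algebraMap
    (vanishingIdeal_isRadical X)).trans eq_comm

/-- **Theorem 1.3(1).** Let `K` be a compact Lie group (realized as a compact subgroup of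
`GL_n(ℝ)`) and `X ⊆ W = ℝⁿ` a `K`-stable real algebraic set.  Then `X` is almost
`K`-reduced if and only if its complexification `Y = X_ℂ ⊆ ℂⁿ` is `G`-saturated, where
`G = K_ℂ` is the complexification of `K`. -/
theorem almost_K_reduced_iff_saturated
    (n : ℕ) (K : Set (Matrix (Fin n) (Fin n) ℝ))
    (hKgrp : IsMatSubgroup ℝ n K) (hKcpt : IsCompact K)
    (X : Set (Fin n → ℝ)) (hXalg : IsAlgebraicSet ℝ n X) (hXstab : Stabilizes ℝ n K X) :
    IsAlmostGReduced ℝ n K X ↔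
      IsSaturated ℂ n (complexifiedGroup n K) (complexification n X) :=
  almost_K_reduced_iff_saturated_general n K hKgrp hKcpt X hXstab

end ZPaper
end
end

section
/- X is K-reduced if and only if its complexification Y = X_ℂ is G-reduced, where G = K_ℂ acts on V = W ⊗_ℝ ℂ. -/
/-!
Common framework: a "compact Lie group / complex reductive group acting on a
finite-dimensional module" is modelled as a subgroup of invertible `n × n`
matrices over `𝕜 = ℝ` or `ℂ` acting on `Fin n → 𝕜` by `Matrix.mulVec`.
Polynomial functions on the module are `MvPolynomial (Fin n) 𝕜`.
-/

set_option synthInstance.maxHeartbeats 1000000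
set_option maxHeartbeats 1000000

noncomputable section

open MvPolynomial

namespace ZPaper

variable (𝕜 : Type) [RCLike 𝕜] (n : ℕ)

/-!
Both ideals of `Y` are the complexifications of the corresponding ideals of `X`. A complex
polynomial vanishes on the real points of `X` iff its coefficientwise real and imaginary parts
do, and it is invariant under `K` iff they are; invariance under `K` and under its Zariski
closure `G = K_ℂ` agree, because `g ↦ q(g v)` is a polynomial in the entries of `g`. Since an
ideal `I` of `ℝ[W]` is recovered from `I ⊗ ℂ` by taking real parts, `I ↦ I ⊗ ℂ` is injective,
so `I_K(X) = I(X)` iff `I_G(Y) = I(Y)`.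
-/

section ReImParts
variable {σ : Type*}

def rePart (q : MvPolynomial σ ℂ) : MvPolynomial σ ℝ :=
  AddMonoidAlgebra.map Complex.reAddGroupHom q

def imPart (q : MvPolynomial σ ℂ) : MvPolynomial σ ℝ :=
  AddMonoidAlgebra.map Complex.imAddGroupHom q

@[simp] lemma coeff_rePart (q : MvPolynomial σ ℂ) (m : σ →₀ ℕ) :
    coeff m (rePart q) = (coeff m q).re := rfl

@[simp] lemma coeff_imPart (q : MvPolynomial σ ℂ) (m : σ →₀ ℕ) :
    coeff m (imPart q) = (coeff m q).im := rfl

@[simp] lemma rePart_zero : rePart (0 : MvPolynomial σ ℂ) = 0 := by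
  ext m; simp

@[simp] lemma imPart_zero : imPart (0 : MvPolynomial σ ℂ) = 0 := by
  ext m; simp

lemma rePart_add (p q : MvPolynomial σ ℂ) : rePart (p + q) = rePart p + rePart q := by
  ext m; simp

lemma imPart_add (p q : MvPolynomial σ ℂ) : imPart (p + q) = imPart p + imPart q := by
  ext m; simp

lemma rePart_mul (p q : MvPolynomial σ ℂ) :
    rePart (p * q) = rePart p * rePart q - imPart p * imPart q := by
  classical
  ext m; simp [coeff_mul, Complex.re_sum, Finset.sum_sub_distrib]

lemma imPart_mul (p q : MvPolynomial σ ℂ) :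
    imPart (p * q) = rePart p * imPart q + imPart p * rePart q := by
  classical
  ext m; simp [coeff_mul, Complex.im_sum, Finset.sum_add_distrib]

@[simp] lemma rePart_map_ofReal (p : MvPolynomial σ ℝ) :
    rePart (map Complex.ofRealHom p) = p := by
  ext m; simp [coeff_map]

@[simp] lemma imPart_map_ofReal (p : MvPolynomial σ ℝ) :
    imPart (map Complex.ofRealHom p) = 0 := by
  ext m; simp [coeff_map]

lemma map_rePart_add_I_mul (q : MvPolynomial σ ℂ) :
    map Complex.ofRealHom (rePart q) + C Complex.I * map Complex.ofRealHom (imPart q) = q := by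
  ext m; simp [coeff_map, Complex.ext_iff]

lemma map_ofReal_eval (x : σ → ℝ) (p : MvPolynomial σ ℝ) :
    eval (fun i => (x i : ℂ)) (map Complex.ofRealHom p) = eval x p :=
  (map_eval Complex.ofRealHom x p).symm

lemma eval_ofReal (x : σ → ℝ) (q : MvPolynomial σ ℂ) :
    eval (fun i => (x i : ℂ)) q = eval x (rePart q) + eval x (imPart q) * Complex.I := by
  conv_lhs => rw [← map_rePart_add_I_mul q]
  rw [map_add, map_mul, eval_C, map_ofReal_eval, map_ofReal_eval, mul_comm]

lemma eval_ofReal_eq_zero_iff (x : σ → ℝ) (q : MvPolynomial σ ℂ) :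
    eval (fun i => (x i : ℂ)) q = 0 ↔ eval x (rePart q) = 0 ∧ eval x (imPart q) = 0 := by
  simp [eval_ofReal, Complex.ext_iff]

lemma eval_ofReal_eq_eval_ofReal_iff (x y : σ → ℝ) (q : MvPolynomial σ ℂ) :
    eval (fun i => (x i : ℂ)) q = eval (fun i => (y i : ℂ)) q ↔
      eval x (rePart q) = eval y (rePart q) ∧ eval x (imPart q) = eval y (imPart q) := by
  simp [eval_ofReal, Complex.ext_iff]

lemma eq_zero_of_eval_ofReal_eq_zero {q : MvPolynomial σ ℂ}
    (h : ∀ x : σ → ℝ, eval (fun i => (x i : ℂ)) q = 0) : q = 0 := by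
  have h' x := (eval_ofReal_eq_zero_iff x q).1 (h x)
  have hre : rePart q = 0 := MvPolynomial.funext fun x => by simpa using (h' x).1
  have him : imPart q = 0 := MvPolynomial.funext fun x => by simpa using (h' x).2
  rw [← map_rePart_add_I_mul q, hre, him, map_zero, mul_zero, add_zero]

lemma mem_map_map_ofReal_iff {I : Ideal (MvPolynomial σ ℝ)} {q : MvPolynomial σ ℂ} :
    q ∈ I.map (map Complex.ofRealHom) ↔ rePart q ∈ I ∧ imPart q ∈ I := by
  let J : Ideal (MvPolynomial σ ℂ) :=
    { carrier := {q | rePart q ∈ I ∧ imPart q ∈ I}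
      zero_mem' := by simp
      add_mem' := fun hp hq => by
        simp only [Set.mem_ofPred_eq, rePart_add, imPart_add] at hp hq ⊢
        exact ⟨add_mem hp.1 hq.1, add_mem hp.2 hq.2⟩
      smul_mem' := fun c q hq => by
        simp only [Set.mem_ofPred_eq, smul_eq_mul, rePart_mul, imPart_mul] at hq ⊢
        exact ⟨sub_mem (I.mul_mem_left _ hq.1) (I.mul_mem_left _ hq.2),
          add_mem (I.mul_mem_left _ hq.2) (I.mul_mem_left _ hq.1)⟩ }
  refine ⟨fun hq => show q ∈ J from Ideal.map_le_iff_le_comap.2 (fun p hp => ?_) hq,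
    fun ⟨hre, him⟩ => ?_⟩
  · simpa [J] using hp
  · rw [← map_rePart_add_I_mul q]
    exact add_mem (Ideal.mem_map_of_mem _ hre)
      (Ideal.mul_mem_left _ _ (Ideal.mem_map_of_mem _ him))

lemma comap_map_map_ofReal (I : Ideal (MvPolynomial σ ℝ)) :
    (I.map (map Complex.ofRealHom)).comap (map Complex.ofRealHom) = I := by
  ext p
  simp [mem_map_map_ofReal_iff]

lemma map_map_ofReal_injective :
    Function.Injective (Ideal.map (map Complex.ofRealHom) : Ideal (MvPolynomial σ ℝ) → _) :=
  Function.LeftInverse.injective comap_map_map_ofReal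

end ReImParts

section LinearSubstitution

open Matrix

lemma eval_bind₁ {R σ τ : Type*} [CommSemiring R] (v : τ → R) (g : σ → MvPolynomial τ R)
    (q : MvPolynomial σ R) : eval v (bind₁ g q) = eval (fun i => eval v (g i)) q :=
  eval₂Hom_bind₁ (RingHom.id R) v g q

lemma eval_bind₁_mulVec {R ι : Type*} [CommRing R] [Fintype ι] (A : Matrix ι ι R)
    (v : ι → R) (q : MvPolynomial ι R) :
    eval v (bind₁ (fun i => ∑ j, C (A i j) * X j) q) = eval (A *ᵥ v) q := by
  rw [eval_bind₁]
  congr 2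
  ext i
  simp [mulVec, dotProduct]

lemma eval_bind₁_mulVec_entries {R ι : Type*} [CommRing R] [Fintype ι] (g : Matrix ι ι R)
    (v : ι → R) (q : MvPolynomial ι R) :
    eval (fun ij => g ij.1 ij.2) (bind₁ (fun i => ∑ j, X (i, j) * C (v j)) q) =
      eval (g *ᵥ v) q := by
  rw [eval_bind₁]
  congr 2
  ext i
  simp [mulVec, dotProduct]

end LinearSubstitution

section Complexification

variable {𝕜 n}

open Matrix

lemma mem_vanishingIdeal {A : Set (Fin n → 𝕜)} {p : MvPolynomial (Fin n) 𝕜} :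
    p ∈ vanishingIdeal 𝕜 n A ↔ ∀ x ∈ A, eval x p = 0 :=
  Iff.rfl

lemma vanishingIdeal_zclosure (A : Set (Fin n → 𝕜)) :
    vanishingIdeal 𝕜 n (zclosure 𝕜 n A) = vanishingIdeal 𝕜 n A :=
  le_antisymm (fun _ hp a ha => hp a fun _ hq => hq a ha) fun p hp _ hz => hz p hp

lemma vanishingIdeal_complexification (X : Set (Fin n → ℝ)) :
    vanishingIdeal ℂ n (complexification n X) =
      (vanishingIdeal ℝ n X).map (map Complex.ofRealHom) := by
  ext q
  unfold complexification cVec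
  simp only [vanishingIdeal_zclosure, mem_vanishingIdeal, Set.forall_mem_image,
    eval_ofReal_eq_zero_iff, mem_map_map_ofReal_iff, imp_and, forall_and]

lemma map_ofReal_mulVec (k : Matrix (Fin n) (Fin n) ℝ) (x : Fin n → ℝ) :
    k.map Complex.ofReal *ᵥ (fun i => (x i : ℂ)) = fun i => ((k *ᵥ x) i : ℂ) := by
  ext i
  simp [mulVec, dotProduct]

lemma invariant_complexifiedGroup_iff {K : Set (Matrix (Fin n) (Fin n) ℝ)}
    {q : MvPolynomial (Fin n) ℂ} :
    Invariant ℂ n (complexifiedGroup n K) q ↔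
      Invariant ℂ n ((Matrix.map · Complex.ofReal) '' K) q := by
  refine ⟨fun hq _ ⟨k, hk, hkg⟩ => hkg ▸ hq _ fun p hp => hp k hk, fun hq g hg v => ?_⟩
  have hvanish := hg (bind₁ (fun i => ∑ j, X (i, j) * C (v j)) q - C (eval v q)) fun k hk => by
    rw [map_sub, eval_C, sub_eq_zero, ← hq _ ⟨k, hk, rfl⟩ v]
    exact eval_bind₁_mulVec_entries (k.map Complex.ofReal) v q
  rwa [map_sub, eval_C, sub_eq_zero, eval_bind₁_mulVec_entries] at hvanish

lemma invariant_image_map_ofReal_iff {K : Set (Matrix (Fin n) (Fin n) ℝ)}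
    {q : MvPolynomial (Fin n) ℂ} :
    Invariant ℂ n ((Matrix.map · Complex.ofReal) '' K) q ↔
      Invariant ℝ n K (rePart q) ∧ Invariant ℝ n K (imPart q) := by
  constructor
  · intro hq
    have h k (hk : k ∈ K) x := (eval_ofReal_eq_eval_ofReal_iff (k *ᵥ x) x q).1 <| by
      rw [← map_ofReal_mulVec]
      exact hq _ ⟨k, hk, rfl⟩ _
    exact ⟨fun k hk x => (h k hk x).1, fun k hk x => (h k hk x).2⟩
  · rintro ⟨hre, him⟩ _ ⟨k, hk, rfl⟩ v
    have hzero : bind₁ (fun i => ∑ j, C (k.map Complex.ofReal i j) * X j) q - q = 0 :=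
      eq_zero_of_eval_ofReal_eq_zero fun x => by
        rw [map_sub, eval_bind₁_mulVec, map_ofReal_mulVec, eval_ofReal, eval_ofReal,
          hre k hk x, him k hk x, sub_self]
    have hv := congrArg (eval v) hzero
    rwa [map_sub, map_zero, sub_eq_zero, eval_bind₁_mulVec] at hv

lemma invariantIdeal_complexification (K : Set (Matrix (Fin n) (Fin n) ℝ))
    (X : Set (Fin n → ℝ)) :
    invariantIdeal ℂ n (complexifiedGroup n K) (complexification n X) =
      (invariantIdeal ℝ n K X).map (map Complex.ofRealHom) := by
  apply le_antisymm
  · refine Ideal.span_le.2 fun q ⟨hinv, hvan⟩ => mem_map_map_ofReal_iff.2 ?_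
    rw [invariant_complexifiedGroup_iff, invariant_image_map_ofReal_iff] at hinv
    rw [← mem_vanishingIdeal, vanishingIdeal_complexification, mem_map_map_ofReal_iff] at hvan
    exact ⟨Ideal.subset_span ⟨hinv.1, hvan.1⟩, Ideal.subset_span ⟨hinv.2, hvan.2⟩⟩
  · rw [invariantIdeal, Ideal.map_span, Ideal.span_le]
    rintro _ ⟨p, ⟨hinv, hvan⟩, rfl⟩
    refine Ideal.subset_span ⟨?_, ?_⟩
    · rw [invariant_complexifiedGroup_iff, invariant_image_map_ofReal_iff, rePart_map_ofReal,
        imPart_map_ofReal]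
      exact ⟨hinv, fun _ _ _ => rfl⟩
    · rw [← mem_vanishingIdeal, vanishingIdeal_complexification]
      exact Ideal.mem_map_of_mem _ hvan

end Complexification

theorem K_reduced_iff_complexification_G_reduced_general
    (n : ℕ) (K : Set (Matrix (Fin n) (Fin n) ℝ))
    (X : Set (Fin n → ℝ)) :
    IsGReduced ℝ n K X ↔
      IsGReduced ℂ n (complexifiedGroup n K) (complexification n X) := by
  rw [IsGReduced, IsGReduced, vanishingIdeal_complexification, invariantIdeal_complexification]
  exact map_map_ofReal_injective.eq_iff.symm

/-- **Theorem 1.3(2).** Let `K` be a compact Lie group (realized as a compact subgroup of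
`GL_n(ℝ)`) and `X ⊆ W = ℝⁿ` a `K`-stable real algebraic set.  Then `X` is `K`-reduced if
and only if its complexification `Y = X_ℂ ⊆ ℂⁿ` is `G`-reduced, where `G = K_ℂ` is the
complexification of `K`. -/
theorem K_reduced_iff_complexification_G_reduced
    (n : ℕ) (K : Set (Matrix (Fin n) (Fin n) ℝ))
    (hKgrp : IsMatSubgroup ℝ n K) (hKcpt : IsCompact K)
    (X : Set (Fin n → ℝ)) (hXalg : IsAlgebraicSet ℝ n X) (hXstab : Stabilizes ℝ n K X) :
    IsGReduced ℝ n K X ↔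
      IsGReduced ℂ n (complexifiedGroup n K) (complexification n X) :=
  K_reduced_iff_complexification_G_reduced_general n K X

end ZPaper
end
end

section
/- Let V be a cofree G-module and U ⊆ V//G a locally closed subset. If the scheme-theoretic inverse image π^{-1}(U) is reduced, then the scheme-theoretic inverse image π^{-1}(closure of U) is also reduced. -/
/-!
Common framework: a "compact Lie group / complex reductive group acting on a
finite-dimensional module" is modelled as a subgroup of invertible `n × n`
matrices over `𝕜 = ℝ` or `ℂ` acting on `Fin n → 𝕜` by `Matrix.mulVec`.
Polynomial functions on the module are `MvPolynomial (Fin n) 𝕜`.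
-/

set_option synthInstance.maxHeartbeats 1000000
set_option maxHeartbeats 1000000

noncomputable section

open MvPolynomial

/-!
Since `ℂ[V]` is free over `R = ℂ[V]^G`, a polynomial lies in `J = I·ℂ[V]`, where `I ⊆ R` is the
ideal of `closure U`, iff all its coordinates in an `R`-basis lie in `I`.  If `x` is nilpotent
modulo `J`, reducedness of the charts `(ℂ[V]/J)_f` gives `f ^ k x ∈ J` for every `f ∈ D`, so
`f ^ k` times each coordinate of `x` vanishes on `π⁻¹(U)`.  The `f ∈ D` have no common zero on
`π⁻¹(U)`, hence each coordinate vanishes there, i.e. lies in `I`, and `x ∈ J`.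
-/

namespace Module.Basis

variable {ι R M : Type*} [CommRing R] [AddCommGroup M] [Module R M]

theorem mem_ideal_smul_top_iff (b : Basis ι R M) (I : Ideal R) (x : M) :
    x ∈ I • (⊤ : Submodule R M) ↔ ∀ i, b.repr x i ∈ I := by
  rw [← b.span_eq, Submodule.mem_ideal_smul_span_iff_exists_sum]
  constructor
  · rintro ⟨a, ha, rfl⟩
    simpa only [← Finsupp.linearCombination_apply, b.repr_linearCombination] using ha
  · exact fun hx => ⟨b.repr x, hx, b.linearCombination_repr x⟩

theorem mem_ideal_map_algebraMap_iff {A : Type*} [CommRing A] [Algebra R A] (b : Basis ι R A)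
    (I : Ideal R) (x : A) : x ∈ I.map (algebraMap R A) ↔ ∀ i, b.repr x i ∈ I := by
  rw [← b.mem_ideal_smul_top_iff, Ideal.smul_top_eq_map, Submodule.restrictScalars_mem]

end Module.Basis

theorem Ideal.mem_map_of_forall_pow_smul_mem {R A : Type*} [CommRing R] [CommRing A]
    [Algebra R A] [Module.Free R A] {I : Ideal R} {T : Set R}
    (hI : ∀ c : R, (∀ t ∈ T, ∃ k : ℕ, t ^ k * c ∈ I) → c ∈ I) {x : A}
    (hx : ∀ t ∈ T, ∃ k : ℕ, t ^ k • x ∈ I.map (algebraMap R A)) :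
    x ∈ I.map (algebraMap R A) := by
  let b := Module.Free.chooseBasis R A
  rw [b.mem_ideal_map_algebraMap_iff]
  refine fun i => hI _ fun t ht => ?_
  obtain ⟨k, hk⟩ := hx t ht
  refine ⟨k, ?_⟩
  simpa only [map_smul, Finsupp.smul_apply, smul_eq_mul]
    using (b.mem_ideal_map_algebraMap_iff I _).1 hk i

theorem IsLocalization.Away.exists_pow_mul_eq_zero_of_isNilpotent {B : Type*} [CommRing B]
    {t a : B} [IsReduced (Localization.Away t)] (ha : IsNilpotent a) :
    ∃ k : ℕ, t ^ k * a = 0 := by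
  obtain ⟨⟨_, k, rfl⟩, hk⟩ := (IsLocalization.map_eq_zero_iff (Submonoid.powers t)
    (Localization.Away t) a).1 (ha.map (algebraMap B (Localization.Away t))).eq_zero
  exact ⟨k, hk⟩

namespace ZPaper

variable (𝕜 : Type) [RCLike 𝕜] (n : ℕ)

theorem map_quotVanishingIdeal (G : Set (Matrix (Fin n) (Fin n) 𝕜)) (S : Set (Fin n → 𝕜)) :
    (quotVanishingIdeal 𝕜 n G S).map (algebraMap (invariantSubalgebra 𝕜 n G) _) =
      Ideal.span {p | Invariant 𝕜 n G p ∧ ∀ u ∈ S, eval u p = 0} := by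
  refine congrArg Ideal.span (Set.ext fun p => ⟨?_, fun hp => ⟨⟨p, hp.1⟩, hp.2, rfl⟩⟩)
  rintro ⟨q, hq, rfl⟩
  exact ⟨q.2, hq⟩

theorem mem_quotVanishingIdeal_of_forall_pow_mul_mem (G : Set (Matrix (Fin n) (Fin n) 𝕜))
    {S : Set (Fin n → 𝕜)} {T : Set (invariantSubalgebra 𝕜 n G)}
    (hST : ∀ u ∈ S, ∃ t ∈ T, eval u (t : MvPolynomial (Fin n) 𝕜) ≠ 0)
    (c : invariantSubalgebra 𝕜 n G)
    (hc : ∀ t ∈ T, ∃ k : ℕ, t ^ k * c ∈ quotVanishingIdeal 𝕜 n G S) :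
    c ∈ quotVanishingIdeal 𝕜 n G S := by
  intro u hu
  obtain ⟨t, ht, htu⟩ := hST u hu
  obtain ⟨k, hk⟩ := hc t ht
  have hvanish :
      eval u (t : MvPolynomial (Fin n) 𝕜) ^ k * eval u (c : MvPolynomial (Fin n) 𝕜) = 0 := by
    simpa only [Subalgebra.coe_mul, Subalgebra.coe_pow, map_mul, map_pow] using hk u hu
  exact (mul_eq_zero.1 hvanish).resolve_left (pow_ne_zero k htu)

/-- Here `π⁻¹(U) = zeroSet C \ zeroSet D`; the scheme `π⁻¹(closure U)` is `Spec (ℂ[V]/J)`, and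
`π⁻¹(U)` is covered by the affine charts `Spec (ℂ[V]/J)_f`, `f ∈ D`. -/
theorem reduced_preimage_closure_of_reduced_preimage_general
    (n : ℕ) (G : Set (Matrix (Fin n) (Fin n) ℂ))
    (hcofree : IsCofree ℂ n G)
    (C D : Set (MvPolynomial (Fin n) ℂ))
    (hD : ∀ p ∈ D, Invariant ℂ n G p)
    (J : Ideal (MvPolynomial (Fin n) ℂ))
    (hJ : J = Ideal.span {p | Invariant ℂ n G p ∧
      ∀ u ∈ zeroSet ℂ n C \ zeroSet ℂ n D, eval u p = 0})
    (hred : ∀ f ∈ D, IsReduced (Localization.Away (Ideal.Quotient.mk J f))) :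
    IsReduced (MvPolynomial (Fin n) ℂ ⧸ J) := by
  have : Module.Free (invariantSubalgebra ℂ n G) (MvPolynomial (Fin n) ℂ) := hcofree
  rw [← map_quotVanishingIdeal] at hJ
  subst hJ
  refine ⟨fun a ha => ?_⟩
  obtain ⟨x, rfl⟩ := Ideal.Quotient.mk_surjective a
  rw [Ideal.Quotient.eq_zero_iff_mem]
  refine Ideal.mem_map_of_forall_pow_smul_mem (T := Subtype.val ⁻¹' D)
    (mem_quotVanishingIdeal_of_forall_pow_mul_mem ℂ n G fun u hu => ?_) fun t ht => ?_
  · obtain ⟨f, hf, hfu⟩ : ∃ f ∈ D, eval u f ≠ 0 := by simpa [zeroSet] using hu.2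
    exact ⟨⟨f, hD f hf⟩, hf, hfu⟩
  · have := hred _ ht
    obtain ⟨k, hk⟩ :=
      IsLocalization.Away.exists_pow_mul_eq_zero_of_isNilpotent (t := Ideal.Quotient.mk _ t.1) ha
    exact ⟨k, by rwa [Algebra.smul_def, ← Ideal.Quotient.eq_zero_iff_mem, map_mul, map_pow]⟩

/-- **Lemma 3.4(2).** Let `G` be a complex reductive group and `V = ℂⁿ` a cofree `G`-module.
Let `U ⊆ V//G` be locally closed, encoded by its inverse image
`π⁻¹(U) = zeroSet C \ zeroSet D` for families `C`, `D` of invariants.  Let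
`J = I(closure U)·ℂ[V]` be the ideal generated by the invariants vanishing on `π⁻¹(U)`, so
that the scheme-theoretic `π⁻¹(closure U)` has coordinate ring `ℂ[V]/J` and the
scheme-theoretic `π⁻¹(U)` is covered by the affine opens with coordinate rings `(ℂ[V]/J)_f`,
`f ∈ D`.  If `π⁻¹(U)` is reduced then so is `π⁻¹(closure U)`. -/
theorem reduced_preimage_closure_of_reduced_preimage
    (n : ℕ) (G : Set (Matrix (Fin n) (Fin n) ℂ)) (hG : IsReductiveGroup ℂ n G)
    (hcofree : IsCofree ℂ n G)
    (C D : Set (MvPolynomial (Fin n) ℂ))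
    (hC : ∀ p ∈ C, Invariant ℂ n G p) (hD : ∀ p ∈ D, Invariant ℂ n G p)
    (J : Ideal (MvPolynomial (Fin n) ℂ))
    (hJ : J = Ideal.span {p | Invariant ℂ n G p ∧
      ∀ u ∈ zeroSet ℂ n C \ zeroSet ℂ n D, eval u p = 0})
    (hred : ∀ f ∈ D, IsReduced (Localization.Away (Ideal.Quotient.mk J f))) :
    IsReduced (MvPolynomial (Fin n) ℂ ⧸ J) :=
  reduced_preimage_closure_of_reduced_preimage_general n G hcofree C D hD J hJ hred

end ZPaper
end
end
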